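/- Let $g \ge 1$ and let $G$ be a group containing elements $c_1,\dots,c_{2g+1}$ satisfying the braid relations. Set $\bar d_j = c_{j+1}^{-1} c_j c_{j+1}$ and $f_j = (c_{j-1} c_{j+1})^{-1} \bar d_j (c_{j-1} c_{j+1})$, with the convention $c_0 = 1$. Then the sequence $(c_1, c_2, \dots, c_{2g+1}, c_1, c_2, \dots, c_{2g+1})$ of length $4g+2$ is Hurwitz equivalent to the sequence $(c_1, c_1, c_3, c_3, c_5, c_5, \dots, c_{2g+1}, c_{2g+1}, f_2, f_4, \dots, f_{2g}, \bar d_2, \bar d_4, \dots, \bar d_{2g})$. -/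

import Mathlib

/-!
The move `(x, y) ↦ (y, y⁻¹ x y)` turns each pair `c_{2j+2}, c_{2j+3}` of `(c_1, …, c_{2g+1})` into
`c_{2j+3}, d̄_{2j+2}`, after which the far commutation relations let the odd generators drift to the
front: `(c_1, …, c_{2g+1}) ∼ (c_1, c_3, …, c_{2g+1}, d̄_2, …, d̄_{2g})`. In the doubled sequence, sliding
the first block of `d̄`'s to the right through the second block of odd generators conjugates every
`d̄_{2j+2}` by their product; all factors except `c_{2j+1} c_{2j+3}` commute with it, so this produces
`f_{2j+2}`. Finally the odd generators commute pairwise, so the two blocks of them interleave into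
`(c_1, c_1, c_3, c_3, …, c_{2g+1}, c_{2g+1})`.
-/

/-- One elementary (Hurwitz) transformation of sequences in a group. -/
def HurwitzStep {G : Type*} [Group G] (s t : List G) : Prop :=
  ∃ (l₁ l₂ : List G) (x y : G),
    (s = l₁ ++ x :: y :: l₂ ∧ t = l₁ ++ (x * y * x⁻¹) :: x :: l₂) ∨
    (s = l₁ ++ x :: y :: l₂ ∧ t = l₁ ++ y :: (y⁻¹ * x * y) :: l₂)

/-- Hurwitz equivalence: finitely many elementary transformations. -/
def HurwitzEquiv {G : Type*} [Group G] : List G → List G → Prop :=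
  Relation.ReflTransGen HurwitzStep

/-- The sequence `a m, a (m+1), …, a k` (ascending indices). -/
def seqAsc {G : Type*} (a : ℕ → G) (m k : ℕ) : List G :=
  (List.range (k + 1 - m)).map fun i => a (m + i)

open List

local infix:50 " ≈ₕ " => HurwitzEquiv

section

variable {G : Type*} [Group G]

theorem HurwitzStep.symm {s t : List G} (h : HurwitzStep s t) : HurwitzStep t s := by
  obtain ⟨l₁, l₂, x, y, ⟨rfl, rfl⟩ | ⟨rfl, rfl⟩⟩ := h
  · exact ⟨l₁, l₂, x * y * x⁻¹, x, Or.inr ⟨rfl, by group⟩⟩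
  · exact ⟨l₁, l₂, y, y⁻¹ * x * y, Or.inl ⟨rfl, by group⟩⟩

theorem HurwitzStep.congr_append (l r : List G) {s t : List G} (h : HurwitzStep s t) :
    HurwitzStep (l ++ s ++ r) (l ++ t ++ r) := by
  obtain ⟨l₁, l₂, x, y, ⟨rfl, rfl⟩ | ⟨rfl, rfl⟩⟩ := h
  · exact ⟨l ++ l₁, l₂ ++ r, x, y, Or.inl ⟨by simp, by simp⟩⟩
  · exact ⟨l ++ l₁, l₂ ++ r, x, y, Or.inr ⟨by simp, by simp⟩⟩

namespace HurwitzEquiv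

theorem refl (s : List G) : s ≈ₕ s := Relation.ReflTransGen.refl

theorem trans {s t u : List G} (h : s ≈ₕ t) (h' : t ≈ₕ u) : s ≈ₕ u :=
  Relation.ReflTransGen.trans h h'

theorem symm {s t : List G} (h : s ≈ₕ t) : t ≈ₕ s := by
  induction h with
  | refl => exact refl s
  | tail _ hstep ih => exact (Relation.ReflTransGen.single hstep.symm).trans ih

theorem move_right (l₁ l₂ : List G) (x y : G) :
    l₁ ++ x :: y :: l₂ ≈ₕ l₁ ++ y :: (y⁻¹ * x * y) :: l₂ :=
  Relation.ReflTransGen.single ⟨l₁, l₂, x, y, Or.inr ⟨rfl, rfl⟩⟩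

theorem append {s₁ s₂ t₁ t₂ : List G} (h₁ : s₁ ≈ₕ t₁) (h₂ : s₂ ≈ₕ t₂) : s₁ ++ s₂ ≈ₕ t₁ ++ t₂ := by
  have congr (l r : List G) {s t : List G} (h : s ≈ₕ t) : l ++ s ++ r ≈ₕ l ++ t ++ r :=
    Relation.ReflTransGen.lift (fun u => l ++ u ++ r) (fun _ _ => HurwitzStep.congr_append l r) _ _ h
  have h₁' := congr [] s₂ h₁
  have h₂' := congr t₁ [] h₂
  simp only [nil_append, append_nil] at h₁' h₂'
  exact h₁'.trans h₂'

theorem cons (a : G) {s t : List G} (h : s ≈ₕ t) : a :: s ≈ₕ a :: t :=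
  (refl [a]).append h

theorem append_cons_of_commute {x : G} {l : List G} (r : List G) (h : ∀ a ∈ l, Commute a x) :
    l ++ x :: r ≈ₕ x :: (l ++ r) := by
  induction l with
  | nil => exact refl _
  | cons a l ih =>
    refine (cons a (ih fun b hb => h b (mem_cons_of_mem a hb))).trans ?_
    simpa [(h a mem_cons_self).symm.inv_mul_cancel] using move_right [] (l ++ r) a x

theorem cons_append_conj (x : G) (l r : List G) :
    x :: (l ++ r) ≈ₕ l ++ (l.prod⁻¹ * x * l.prod) :: r := by
  induction l generalizing x with
  | nil => simpa using refl (x :: r)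
  | cons a l ih =>
    refine (move_right [] (l ++ r) x a).trans ?_
    simpa [mul_assoc] using cons a (ih (a⁻¹ * x * a))

theorem append_append_map_conj (ds A r : List G) :
    ds ++ (A ++ r) ≈ₕ A ++ (ds.map (fun x => A.prod⁻¹ * x * A.prod) ++ r) := by
  induction ds with
  | nil => exact refl _
  | cons x ds ih => exact (cons x ih).trans (cons_append_conj x A _)

theorem flatten_map {α : Type*} {u v : α → List G} (l : List α) (h : ∀ a ∈ l, u a ≈ₕ v a) :
    (l.map u).flatten ≈ₕ (l.map v).flatten := by
  induction l with
  | nil => exact refl _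
  | cons a l ih => exact (h a mem_cons_self).append (ih fun b hb => h b (mem_cons_of_mem a hb))

theorem flatten_map_pair (a b : ℕ → G) (m : ℕ) (h : ∀ j k, j < k → k < m → Commute (b j) (a k)) :
    ((range m).map fun j => [a j, b j]).flatten ≈ₕ (range m).map a ++ (range m).map b := by
  induction m with
  | zero => exact refl _
  | succ m ih =>
    have hm : ∀ y ∈ (range m).map b, Commute y (a m) := by
      simp only [mem_map, mem_range]
      rintro _ ⟨j, hj, rfl⟩
      exact h j m hj (lt_add_one m)
    simp only [range_succ, map_append, map_cons, map_nil, flatten_append, flatten_cons,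
      flatten_nil, append_nil]
    refine ((ih fun j k hjk hk => h j k hjk (hk.trans (lt_add_one m))).append (refl _)).trans ?_
    simpa using (refl ((range m).map a)).append (append_cons_of_commute [b m] hm)

end HurwitzEquiv

instance : Trans (HurwitzEquiv (G := G)) (HurwitzEquiv (G := G)) (HurwitzEquiv (G := G)) :=
  ⟨HurwitzEquiv.trans⟩

theorem conj_prod_append_of_commute {x : G} {l₁ l₃ : List G} (l₂ : List G)
    (h₁ : ∀ a ∈ l₁, Commute a x) (h₃ : ∀ a ∈ l₃, Commute a (l₂.prod⁻¹ * x * l₂.prod)) :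
    (l₁ ++ l₂ ++ l₃).prod⁻¹ * x * (l₁ ++ l₂ ++ l₃).prod = l₂.prod⁻¹ * x * l₂.prod := by
  have e₁ := (Commute.list_prod_left l₁ x h₁).inv_mul_cancel
  have e₃ := (Commute.list_prod_left l₃ _ h₃).inv_mul_cancel
  calc _ = l₃.prod⁻¹ * (l₂.prod⁻¹ * (l₁.prod⁻¹ * x * l₁.prod) * l₂.prod) * l₃.prod := by
        simp only [prod_append]; group
    _ = _ := by rw [e₁, e₃]

theorem seqAsc_succ {α : Type*} (a : ℕ → α) {m k : ℕ} (h : m ≤ k + 1) :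
    seqAsc a m (k + 1) = seqAsc a m k ++ [a (k + 1)] := by
  rw [seqAsc, seqAsc, show k + 1 + 1 - m = k + 1 - m + 1 by omega, range_succ, map_append,
    map_singleton, show m + (k + 1 - m) = k + 1 by omega]

theorem seqAsc_one_two_mul_add_one {α : Type*} (c : ℕ → α) (g : ℕ) :
    seqAsc c 1 (2 * g + 1) =
      c 1 :: ((range g).map fun j => [c (2 * j + 2), c (2 * j + 3)]).flatten := by
  induction g with
  | zero => rfl
  | succ g ih =>
    rw [show 2 * (g + 1) + 1 = 2 * g + 2 + 1 by ring, seqAsc_succ c (by omega),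
      seqAsc_succ c (by omega), ih, range_succ]
    simp

def dbar (c : ℕ → G) (j : ℕ) : G := (c (j + 1))⁻¹ * c j * c (j + 1)

theorem Commute.dbar {x : G} {c : ℕ → G} {j : ℕ} (h₀ : Commute x (c j))
    (h₁ : Commute x (c (j + 1))) : Commute x (dbar c j) :=
  (h₁.inv_right.mul_right h₀).mul_right h₁

def FarCommute (c : ℕ → G) (n : ℕ) : Prop :=
  ∀ i j, 1 ≤ i → j ≤ n → i + 2 ≤ j → c i * c j = c j * c i

theorem FarCommute.commute {c : ℕ → G} {n i j : ℕ} (hc : FarCommute c n) (hi : 1 ≤ i)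
    (hj : j ≤ n) (hij : i + 2 ≤ j) : Commute (c i) (c j) :=
  hc i j hi hj hij

variable {c : ℕ → G} {g : ℕ}

theorem seqAsc_hurwitzEquiv_odd_append_dbar (hc : FarCommute c (2 * g + 1)) :
    seqAsc c 1 (2 * g + 1) ≈ₕ
      (range (g + 1)).map (fun k => c (2 * k + 1)) ++ (range g).map fun j => dbar c (2 * j + 2) := by
  have pairs : ((range g).map fun j => [c (2 * j + 2), c (2 * j + 3)]).flatten ≈ₕ
      ((range g).map fun j => [c (2 * j + 3), dbar c (2 * j + 2)]).flatten :=
    HurwitzEquiv.flatten_map _ fun j _ => HurwitzEquiv.move_right [] [] _ _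
  have unzip := HurwitzEquiv.flatten_map_pair (fun j => c (2 * j + 3))
    (fun j => dbar c (2 * j + 2)) g fun j k hjk hk =>
      (Commute.dbar (hc.commute (by omega) (by omega) (by omega)).symm
        (hc.commute (i := 2 * j + 2 + 1) (by omega) (by omega) (by omega)).symm).symm
  rw [seqAsc_one_two_mul_add_one, range_succ_eq_map, map_cons, map_map]
  exact (pairs.trans unzip).cons (c 1)

theorem conj_prod_odd_dbar (hc : FarCommute c (2 * g + 1)) {j : ℕ} (hj : j < g) :
    (((range (g + 1)).map fun k => c (2 * k + 1)).prod)⁻¹ * dbar c (2 * j + 2) *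
        ((range (g + 1)).map fun k => c (2 * k + 1)).prod =
      (c (2 * j + 1) * c (2 * j + 3))⁻¹ * dbar c (2 * j + 2) * (c (2 * j + 1) * c (2 * j + 3)) := by
  obtain ⟨t, rfl⟩ : ∃ t, g = j + 1 + t := ⟨g - j - 1, by omega⟩
  have hsplit : (range (j + 1 + t + 1)).map (fun k => c (2 * k + 1)) =
      (range j).map (fun k => c (2 * k + 1)) ++ [c (2 * j + 1), c (2 * j + 3)] ++
        (range t).map (fun k => c (2 * (j + 2 + k) + 1)) := by
    rw [show j + 1 + t + 1 = j + 2 + t by omega, range_add, range_add]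
    simp [range_succ, Nat.mul_succ]
  rw [hsplit, conj_prod_append_of_commute, prod_pair]
  · simp only [mem_map, mem_range]
    rintro _ ⟨k, hk, rfl⟩
    exact .dbar (hc.commute (by omega) (by omega) (by omega))
      (hc.commute (by omega) (by omega) (by omega))
  · simp only [mem_map, mem_range, prod_pair]
    rintro _ ⟨k, hk, rfl⟩
    have hQ : Commute (c (2 * (j + 2 + k) + 1)) (c (2 * j + 1) * c (2 * j + 3)) :=
      (hc.commute (by omega) (by omega) (by omega)).symm.mul_right
        (hc.commute (by omega) (by omega) (by omega)).symm
    have hd : Commute (c (2 * (j + 2 + k) + 1)) (dbar c (2 * j + 2)) :=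
      .dbar (hc.commute (by omega) (by omega) (by omega)).symm
        (hc.commute (by omega) (by omega) (by omega)).symm
    exact (hQ.inv_right.mul_right hd).mul_right hQ

end

theorem statement11_general {G : Type*} [Group G] (g : ℕ) (c : ℕ → G)
    (hcomm : ∀ i j, 1 ≤ i → j ≤ 2 * g + 1 → i + 2 ≤ j → c i * c j = c j * c i) :
    HurwitzEquiv (seqAsc c 1 (2 * g + 1) ++ seqAsc c 1 (2 * g + 1))
      ((((List.range (g + 1)).map fun j => [c (2 * j + 1), c (2 * j + 1)]).flatten) ++
        ((List.range g).map fun j =>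
          (c (2 * j + 1) * c (2 * j + 3))⁻¹ *
            ((c (2 * j + 3))⁻¹ * c (2 * j + 2) * c (2 * j + 3)) *
            (c (2 * j + 1) * c (2 * j + 3))) ++
        ((List.range g).map fun j =>
          (c (2 * j + 3))⁻¹ * c (2 * j + 2) * c (2 * j + 3))) := by
  set A := (range (g + 1)).map fun k => c (2 * k + 1)
  set D := (range g).map fun j => dbar c (2 * j + 2)
  have hseq : seqAsc c 1 (2 * g + 1) ≈ₕ A ++ D := seqAsc_hurwitzEquiv_odd_append_dbar hcomm
  have hconj : D.map (fun x => A.prod⁻¹ * x * A.prod) = (range g).map fun j =>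
      (c (2 * j + 1) * c (2 * j + 3))⁻¹ * dbar c (2 * j + 2) * (c (2 * j + 1) * c (2 * j + 3)) := by
    rw [map_map]
    exact map_congr_left fun j hj => conj_prod_odd_dbar hcomm (mem_range.mp hj)
  have hodd : A ++ A ≈ₕ ((range (g + 1)).map fun j => [c (2 * j + 1), c (2 * j + 1)]).flatten :=
    (HurwitzEquiv.flatten_map_pair (fun k => c (2 * k + 1)) (fun k => c (2 * k + 1)) (g + 1)
      fun j k hjk hk => FarCommute.commute hcomm (by omega) (by omega) (by omega)).symm
  calc seqAsc c 1 (2 * g + 1) ++ seqAsc c 1 (2 * g + 1)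
      _ ≈ₕ (A ++ D) ++ (A ++ D) := hseq.append hseq
      _ = A ++ (D ++ (A ++ D)) := append_assoc _ _ _
      _ ≈ₕ A ++ (A ++ (D.map (fun x => A.prod⁻¹ * x * A.prod) ++ D)) :=
        (HurwitzEquiv.refl A).append (HurwitzEquiv.append_append_map_conj D A D)
      _ = (A ++ A) ++ D.map (fun x => A.prod⁻¹ * x * A.prod) ++ D := by simp only [append_assoc]
      _ ≈ₕ _ := by rw [hconj]; exact (hodd.append (.refl _)).append (.refl _)

/-- relation (15) of the paper: with `d̄ j = (c (j+1))⁻¹ * c j * c (j+1)`,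
`f j = (c (j-1) * c (j+1))⁻¹ * d̄ j * (c (j-1) * c (j+1))`, and the convention `c 0 = 1`,
the sequence `(c 1, …, c (2g+1), c 1, …, c (2g+1))` is Hurwitz equivalent to
`(c 1, c 1, c 3, c 3, …, c (2g+1), c (2g+1), f 2, f 4, …, f (2g), d̄ 2, d̄ 4, …, d̄ (2g))`. -/
theorem statement11 {G : Type*} [Group G] (g : ℕ) (hg : 1 ≤ g) (c : ℕ → G)
    (hc0 : c 0 = 1)
    (hbraid : ∀ i, 1 ≤ i → i + 1 ≤ 2 * g + 1 →
      c i * c (i + 1) * c i = c (i + 1) * c i * c (i + 1))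
    (hcomm : ∀ i j, 1 ≤ i → j ≤ 2 * g + 1 → i + 2 ≤ j → c i * c j = c j * c i) :
    HurwitzEquiv (seqAsc c 1 (2 * g + 1) ++ seqAsc c 1 (2 * g + 1))
      ((((List.range (g + 1)).map fun j => [c (2 * j + 1), c (2 * j + 1)]).flatten) ++
        ((List.range g).map fun j =>
          (c (2 * j + 1) * c (2 * j + 3))⁻¹ *
            ((c (2 * j + 3))⁻¹ * c (2 * j + 2) * c (2 * j + 3)) *
            (c (2 * j + 1) * c (2 * j + 3))) ++
        ((List.range g).map fun j =>
          (c (2 * j + 3))⁻¹ * c (2 * j + 2) * c (2 * j + 3))) :=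
  statement11_general g c hcomm
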